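/- Every subset of the circle C = {(z,0) : |z|=1} ⊂ ∂𝔹₂ that supports a probability measure has capacity zero with respect to the kernel |K(z,w)| = |1 − ⟨z,w⟩|^{−1}: more precisely, for every probability measure ν supported on C, sup_{0≤r<1} ∫∫ |1 − r²⟨z,w⟩|^{−1} dν(w) dν(z) = ∞. -/

import Mathlib

open MeasureTheory Complex
open scoped ENNReal

local notation "⟪" x ", " y "⟫" => @inner ℂ _ _ x y

noncomputable instance (d : ℕ) : MeasurableSpace (EuclideanSpace ℂ (Fin d)) := borel _
instance (d : ℕ) : BorelSpace (EuclideanSpace ℂ (Fin d)) := ⟨rfl⟩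

/-- The circle `C = {(z,0) : |z| = 1} ⊆ ∂𝔹₂`. -/
noncomputable def circleC : Set (EuclideanSpace ℂ (Fin 2)) :=
  (fun z : ℂ => (EuclideanSpace.equiv (Fin 2) ℂ).symm ![z, 0]) '' Metric.sphere (0 : ℂ) 1

/-!
Write `|1 - u|⁻¹ = |(1 - u)^{-1/2}|² = |∑ aₙ uⁿ|²` with `aₙ = C(2n,n)/4ⁿ > 0`. For points
`z, w` of the circle and `u = r² ⟨w, z⟩ = r² w̄₀ z₀` this expands the energy of `ν` as
`∑_{m,n} aₘ aₙ r^{2(m+n)} |∫ ζ^m ζ̄^n dν|²`, a series of nonnegative terms whose diagonal terms are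
`aₙ² r^{4n}` because `|ζ| = 1` on the circle. Since `4(n+1) aₙ₊₁² ≥ 1`, the series `∑ aₙ²`
diverges, so the energies are unbounded as `r → 1`.
-/

open Finset Filter Topology ComplexConjugate

/-- The Taylor coefficients of `(1 - u)^{-1/2}`; they equal `C(2n,n) / 4ⁿ`. -/
noncomputable def invSqrtCoeff (n : ℕ) : ℝ := (-1) ^ n * Ring.choose (-1 / 2 : ℝ) n

section invSqrtCoeff

lemma invSqrtCoeff_zero : invSqrtCoeff 0 = 1 := by simp [invSqrtCoeff]

lemma invSqrtCoeff_succ (n : ℕ) :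
    2 * (n + 1) * invSqrtCoeff (n + 1) = (2 * n + 1) * invSqrtCoeff n := by
  have h := Ring.choose_smul_choose (-1 / 2 : ℝ) (Nat.le_add_right n 1)
  rw [Nat.choose_succ_self_right, Nat.add_sub_cancel_left, Ring.choose_one_right,
    nsmul_eq_mul] at h
  simp only [invSqrtCoeff, pow_succ]
  push_cast at h
  linear_combination (-2 * (-1) ^ n : ℝ) * h

/-- Vandermonde's identity for `-1/2 + -1/2 = -1`. -/
lemma sum_antidiagonal_invSqrtCoeff_mul (n : ℕ) :
    ∑ p ∈ antidiagonal n, invSqrtCoeff p.1 * invSqrtCoeff p.2 = 1 := by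
  have h := Ring.add_choose_eq (r := (-1 / 2 : ℝ)) (s := -1 / 2) n (Commute.refl _)
  rw [show (-1 / 2 + -1 / 2 : ℝ) = -(1 : ℕ) by norm_num, Ring.choose_neg,
    Nat.cast_one, add_sub_cancel_left, Ring.choose_natCast, Nat.choose_self] at h
  calc ∑ p ∈ antidiagonal n, invSqrtCoeff p.1 * invSqrtCoeff p.2
      = (-1) ^ n * ∑ p ∈ antidiagonal n,
          Ring.choose (-1 / 2 : ℝ) p.1 * Ring.choose (-1 / 2 : ℝ) p.2 := by
        rw [mul_sum]
        refine sum_congr rfl fun p hp => ?_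
        rw [← mem_antidiagonal.1 hp, invSqrtCoeff, invSqrtCoeff, pow_add]
        ring
    _ = 1 := by
        rw [← h]
        simp [Units.smul_def, ← mul_pow]

lemma invSqrtCoeff_pos (n : ℕ) : 0 < invSqrtCoeff n := by
  induction n with
  | zero => simp [invSqrtCoeff_zero]
  | succ n ih => nlinarith [invSqrtCoeff_succ n]

lemma invSqrtCoeff_le_one (n : ℕ) : invSqrtCoeff n ≤ 1 := by
  induction n with
  | zero => simp [invSqrtCoeff_zero]
  | succ n ih => nlinarith [invSqrtCoeff_succ n, invSqrtCoeff_pos n, invSqrtCoeff_pos (n + 1)]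

lemma one_le_four_mul_invSqrtCoeff_sq (n : ℕ) :
    1 ≤ 4 * (n + 1) * invSqrtCoeff (n + 1) ^ 2 := by
  induction n with
  | zero =>
    have h := invSqrtCoeff_succ 0
    simp only [invSqrtCoeff_zero, CharP.cast_eq_zero] at h
    nlinarith
  | succ n ih =>
    have h := invSqrtCoeff_succ (n + 1)
    set a := invSqrtCoeff (n + 1)
    set a' := invSqrtCoeff (n + 1 + 1)
    push_cast at h ⊢
    have hsq : (n + 2) * (4 * (n + 2) * a' ^ 2) = (2 * n + 3) ^ 2 * a ^ 2 := by
      linear_combination (2 * (n + 2) * a' + (2 * n + 3) * a) * h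
    refine le_of_mul_le_mul_left ?_ (by positivity : (0 : ℝ) < n + 2)
    nlinarith [sq_nonneg a]

lemma not_summable_invSqrtCoeff_sq : ¬ Summable fun n => invSqrtCoeff n ^ 2 := by
  intro h
  refine Real.not_summable_one_div_natCast ((summable_nat_add_iff 1).1 ?_)
  refine (((summable_nat_add_iff 1).2 h).mul_left 4).of_nonneg_of_le (fun n => by positivity)
    fun n => ?_
  have := one_le_four_mul_invSqrtCoeff_sq n
  push_cast
  rw [div_le_iff₀ (by positivity)]
  linarith

lemma summable_invSqrtCoeff_mul_pow {s : ℝ} (hs0 : 0 ≤ s) (hs1 : s < 1) :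
    Summable fun n => invSqrtCoeff n * s ^ n :=
  (summable_geometric_of_lt_one hs0 hs1).of_nonneg_of_le
    (fun n => mul_nonneg (invSqrtCoeff_pos n).le (pow_nonneg hs0 n))
    fun n => mul_le_of_le_one_left (pow_nonneg hs0 n) (invSqrtCoeff_le_one n)

lemma summable_norm_invSqrtCoeff_mul_pow {u : ℂ} (hu : ‖u‖ < 1) :
    Summable fun n => ‖(invSqrtCoeff n : ℂ) * u ^ n‖ := by
  refine (summable_geometric_of_lt_one (norm_nonneg u) hu).of_nonneg_of_le
    (fun n => norm_nonneg _) fun n => ?_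
  rw [norm_mul, norm_pow, norm_real, Real.norm_of_nonneg (invSqrtCoeff_pos n).le]
  exact mul_le_of_le_one_left (by positivity) (invSqrtCoeff_le_one n)

lemma tsum_invSqrtCoeff_mul_pow_sq {u : ℂ} (hu : ‖u‖ < 1) :
    (∑' n, (invSqrtCoeff n : ℂ) * u ^ n) ^ 2 = (1 - u)⁻¹ := by
  rw [sq, tsum_mul_tsum_eq_tsum_sum_antidiagonal_of_summable_norm
    (summable_norm_invSqrtCoeff_mul_pow hu) (summable_norm_invSqrtCoeff_mul_pow hu),
    ← tsum_geometric_of_norm_lt_one hu]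
  refine tsum_congr fun n => ?_
  calc ∑ p ∈ antidiagonal n, (invSqrtCoeff p.1 : ℂ) * u ^ p.1 * ((invSqrtCoeff p.2 : ℂ) * u ^ p.2)
      = ((∑ p ∈ antidiagonal n, invSqrtCoeff p.1 * invSqrtCoeff p.2 : ℝ) : ℂ) * u ^ n := by
        push_cast
        rw [sum_mul]
        refine sum_congr rfl fun p hp => ?_
        rw [← mem_antidiagonal.1 hp, pow_add]
        ring
    _ = u ^ n := by rw [sum_antidiagonal_invSqrtCoeff_mul, ofReal_one, one_mul]

lemma ofReal_norm_one_sub_inv_eq_tsum {u : ℂ} (hu : ‖u‖ < 1) :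
    ((‖1 - u‖⁻¹ : ℝ) : ℂ) =
      ∑' p : ℕ × ℕ, ((invSqrtCoeff p.1 * invSqrtCoeff p.2 : ℝ) : ℂ) * (u ^ p.1 * conj u ^ p.2) := by
  set S := ∑' n, (invSqrtCoeff n : ℂ) * u ^ n
  have hconj : conj S = ∑' n, (invSqrtCoeff n : ℂ) * conj u ^ n := by
    simp only [S, Complex.conj_tsum, map_mul, conj_ofReal, map_pow]
  have hnorm : ‖1 - u‖⁻¹ = ‖S‖ ^ 2 := by
    rw [← norm_pow, tsum_invSqrtCoeff_mul_pow_sq hu, norm_inv]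
  calc ((‖1 - u‖⁻¹ : ℝ) : ℂ) = S * conj S := by rw [hnorm, mul_conj, normSq_eq_norm_sq]
    _ = _ := by
      rw [hconj, tsum_mul_tsum_of_summable_norm (summable_norm_invSqrtCoeff_mul_pow hu)
        (summable_norm_invSqrtCoeff_mul_pow (by rwa [RCLike.norm_conj]))]
      refine tsum_congr fun p => ?_
      push_cast
      ring

end invSqrtCoeff

section Energy

variable {X : Type*} [MeasurableSpace X] {ν : Measure X}

lemma integral_tsum_of_norm_le [IsFiniteMeasure ν] {ι E : Type*} [Countable ι]
    [NormedAddCommGroup E] [NormedSpace ℝ E] {F : ι → X → E} {c : ι → ℝ} (hc : Summable c)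
    (hF : ∀ i, AEStronglyMeasurable (F i) ν) (hFc : ∀ i, ∀ᵐ x ∂ν, ‖F i x‖ ≤ c i) :
    ∫ x, ∑' i, F i x ∂ν = ∑' i, ∫ x, F i x ∂ν := by
  refine (integral_tsum_of_summable_integral_norm (fun i => .of_bound (hF i) _ (hFc i)) ?_).symm
  refine (hc.mul_right (ν.real Set.univ)).of_nonneg_of_le
    (fun i => integral_nonneg fun _ => norm_nonneg _) fun i => (le_abs_self _).trans ?_
  simpa using norm_integral_le_of_norm_le_const (f := fun x => ‖F i x‖) (by simpa using hFc i)

lemma integral_integral_tsum_mul_conj [IsFiniteMeasure ν] {ι : Type*} [Countable ι]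
    {c : ι → ℝ} (hc : Summable c) {φ : ι → X → ℂ} (hφ : ∀ i, AEStronglyMeasurable (φ i) ν)
    (hφ1 : ∀ i, ∀ᵐ x ∂ν, ‖φ i x‖ ≤ 1) :
    ∫ z, ∫ w, ∑' i, (c i : ℂ) * (φ i z * conj (φ i w)) ∂ν ∂ν =
      ∑' i, ((c i * ‖∫ x, φ i x ∂ν‖ ^ 2 : ℝ) : ℂ) := by
  have habs : Summable fun i => |c i| := summable_abs_iff.2 hc
  have hinner : ∀ᵐ z ∂ν, ∫ w, ∑' i, (c i : ℂ) * (φ i z * conj (φ i w)) ∂ν =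
      ∑' i, (c i : ℂ) * conj (∫ x, φ i x ∂ν) * φ i z := by
    filter_upwards [ae_all_iff.2 hφ1] with z hz
    rw [integral_tsum_of_norm_le habs (fun i => by fun_prop) fun i => ?_]
    · refine tsum_congr fun i => ?_
      rw [integral_const_mul, integral_const_mul, integral_conj]
      ring
    · filter_upwards [hφ1 i] with w hw
      rw [norm_mul, norm_mul, norm_real, Real.norm_eq_abs, RCLike.norm_conj]
      exact mul_le_of_le_one_right (abs_nonneg _) (mul_le_one₀ (hz i) (norm_nonneg _) hw)
  rw [integral_congr_ae hinner, integral_tsum_of_norm_le (habs.mul_right (ν.real Set.univ))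
    (fun i => by fun_prop) fun i => ?_]
  · refine tsum_congr fun i => ?_
    rw [integral_const_mul, mul_assoc, conj_mul']
    push_cast
    ring
  · filter_upwards [hφ1 i] with z hz
    have hI : ‖∫ x, φ i x ∂ν‖ ≤ ν.real Set.univ := by
      simpa using norm_integral_le_of_norm_le_const (hφ1 i)
    rw [norm_mul, norm_mul, norm_real, Real.norm_eq_abs, RCLike.norm_conj]
    calc |c i| * ‖∫ x, φ i x ∂ν‖ * ‖φ i z‖ ≤ |c i| * ν.real Set.univ * 1 := by gcongr
      _ = _ := mul_one _

lemma sum_range_le_integral_integral_norm_one_sub_inv [IsProbabilityMeasure ν] {f : X → ℂ}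
    (hf : AEStronglyMeasurable f ν) (hf1 : ∀ᵐ x ∂ν, ‖f x‖ = 1) {s : ℝ} (hs0 : 0 ≤ s)
    (hs1 : s < 1) (N : ℕ) :
    ∑ n ∈ range N, invSqrtCoeff n ^ 2 * s ^ (2 * n) ≤
      ∫ z, ∫ w, ‖1 - s * (conj (f w) * f z)‖⁻¹ ∂ν ∂ν := by
  set φ : ℕ × ℕ → X → ℂ := fun p x => f x ^ p.1 * conj (f x) ^ p.2
  set c : ℕ × ℕ → ℝ := fun p => invSqrtCoeff p.1 * s ^ p.1 * (invSqrtCoeff p.2 * s ^ p.2)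
  have hc0 : ∀ p, 0 ≤ c p := fun p => by
    have := invSqrtCoeff_pos p.1; have := invSqrtCoeff_pos p.2; positivity
  have hc : Summable c := (summable_invSqrtCoeff_mul_pow hs0 hs1).mul_of_nonneg
    (summable_invSqrtCoeff_mul_pow hs0 hs1)
    (fun n => mul_nonneg (invSqrtCoeff_pos n).le (pow_nonneg hs0 n))
    (fun n => mul_nonneg (invSqrtCoeff_pos n).le (pow_nonneg hs0 n))
  have hφ1 : ∀ p, ∀ᵐ x ∂ν, ‖φ p x‖ ≤ 1 := fun p => hf1.mono fun x hx => by simp [φ, hx]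
  have hkernel : ∀ᵐ z ∂ν, ∀ᵐ w ∂ν, ((‖1 - s * (conj (f w) * f z)‖⁻¹ : ℝ) : ℂ) =
      ∑' p, (c p : ℂ) * (φ p z * conj (φ p w)) := by
    filter_upwards [hf1] with z hz
    filter_upwards [hf1] with w hw
    have hu : ‖(s : ℂ) * (conj (f w) * f z)‖ < 1 := by simp [hz, hw, abs_of_nonneg hs0, hs1]
    rw [ofReal_norm_one_sub_inv_eq_tsum hu]
    refine tsum_congr fun p => ?_
    simp only [φ, c, map_mul, map_pow, conj_ofReal, conj_conj]
    push_cast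
    ring
  have henergy : ∫ z, ∫ w, ‖1 - s * (conj (f w) * f z)‖⁻¹ ∂ν ∂ν =
      ∑' p, c p * ‖∫ x, φ p x ∂ν‖ ^ 2 := by
    apply ofReal_injective
    rw [← integral_complex_ofReal, ofReal_tsum,
      ← integral_integral_tsum_mul_conj hc (fun p => by fun_prop) hφ1]
    refine integral_congr_ae (hkernel.mono fun z hz => ?_)
    simp only [← integral_complex_ofReal]
    exact integral_congr_ae hz
  have hdiag : ∀ n, ∫ x, φ (n, n) x ∂ν = 1 := by
    intro n
    rw [integral_congr_ae (g := fun _ => 1) (hf1.mono fun x hx => ?_)]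
    · simp
    · simp [φ, ← mul_pow, mul_conj, normSq_eq_norm_sq, hx]
  have hsum : Summable fun p => c p * ‖∫ x, φ p x ∂ν‖ ^ 2 := by
    refine hc.of_nonneg_of_le (fun p => by have := hc0 p; positivity) fun p => ?_
    have hI : ‖∫ x, φ p x ∂ν‖ ≤ 1 := by
      simpa using norm_integral_le_of_norm_le_const (hφ1 p)
    exact mul_le_of_le_one_right (hc0 p) (pow_le_one₀ (norm_nonneg _) hI)
  calc ∑ n ∈ range N, invSqrtCoeff n ^ 2 * s ^ (2 * n)
      = ∑ p ∈ (range N).map ⟨Function.diag, Function.diag_injective⟩,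
          c p * ‖∫ x, φ p x ∂ν‖ ^ 2 := by
        rw [sum_map]
        refine sum_congr rfl fun n _ => ?_
        simp only [Function.Embedding.coeFn_mk, Function.diag, hdiag, norm_one, c]
        ring
    _ ≤ ∑' p, c p * ‖∫ x, φ p x ∂ν‖ ^ 2 :=
        hsum.sum_le_tsum _ fun p _ => by have := hc0 p; positivity
    _ = _ := henergy.symm

end Energy

lemma exists_lt_sum_range_mul_pow_of_not_summable {b : ℕ → ℝ} (hb0 : ∀ n, 0 ≤ b n)
    (hb : ¬ Summable b) (k : ℕ) (M : ℝ) :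
    ∃ N, ∃ r ∈ Set.Ioo (0 : ℝ) 1, M < ∑ n ∈ range N, b n * r ^ (k * n) := by
  obtain ⟨N, hN⟩ :=
    ((not_summable_iff_tendsto_nat_atTop_of_nonneg hb0).1 hb |>.eventually_gt_atTop M).exists
  have hcont : Continuous fun r : ℝ => ∑ n ∈ range N, b n * r ^ (k * n) := by fun_prop
  have hnear : ∀ᶠ r in 𝓝[<] (1 : ℝ), M < ∑ n ∈ range N, b n * r ^ (k * n) :=
    nhdsWithin_le_nhds (hcont.tendsto 1 |>.eventually (lt_mem_nhds (by simpa using hN)))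
  obtain ⟨r, hr, hr01⟩ := (hnear.and (Ioo_mem_nhdsLT zero_lt_one)).exists
  exact ⟨N, r, hr01, hr⟩

lemma norm_apply_zero_of_mem_circleC {z : EuclideanSpace ℂ (Fin 2)} (hz : z ∈ circleC) :
    ‖z 0‖ = 1 := by
  obtain ⟨ξ, hξ, rfl⟩ := hz
  simpa using hξ

lemma inner_eq_of_mem_circleC (w : EuclideanSpace ℂ (Fin 2)) {z : EuclideanSpace ℂ (Fin 2)}
    (hz : z ∈ circleC) : ⟪w, z⟫ = conj (w 0) * z 0 := by
  obtain ⟨ξ, -, rfl⟩ := hz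
  simp [PiLp.inner_apply, Fin.sum_univ_two, mul_comm]

/-- Every probability measure `ν` supported on the circle `C = {(z,0) : |z|=1} ⊆ ∂𝔹₂` has
infinite energy with respect to the modulus of the Drury–Arveson kernel
`|K(z,w)| = |1 − ⟨z,w⟩|⁻¹`; hence `C` has capacity zero for that kernel. -/
theorem stmt9 (ν : Measure (EuclideanSpace ℂ (Fin 2))) [IsProbabilityMeasure ν]
    (hν : ν circleCᶜ = 0) :
    (⨆ r : {r : ℝ // 0 ≤ r ∧ r < 1},
        ENNReal.ofReal (∫ z, ∫ w, ‖(1 : ℂ) - ((r : ℝ) : ℂ) ^ 2 * ⟪w, z⟫‖⁻¹ ∂ν ∂ν)) = ⊤ := by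
  have hC : ∀ᵐ z ∂ν, z ∈ circleC := ae_iff.2 hν
  rw [iSup_eq_top]
  intro b hb
  obtain ⟨N, r, hr, hbN⟩ := exists_lt_sum_range_mul_pow_of_not_summable
    (fun n => sq_nonneg (invSqrtCoeff n)) not_summable_invSqrtCoeff_sq 4 b.toReal
  refine ⟨⟨r, hr.1.le, hr.2⟩, (ENNReal.lt_ofReal_iff_toReal_lt hb.ne).2 ?_⟩
  calc b.toReal < ∑ n ∈ range N, invSqrtCoeff n ^ 2 * (r ^ 2) ^ (2 * n) :=
        hbN.trans_eq (sum_congr rfl fun n _ => by ring)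
    _ ≤ ∫ z, ∫ w, ‖1 - ((r ^ 2 : ℝ) : ℂ) * (conj (w 0) * z 0)‖⁻¹ ∂ν ∂ν :=
        sum_range_le_integral_integral_norm_one_sub_inv (by fun_prop)
          (hC.mono fun z => norm_apply_zero_of_mem_circleC) (by positivity)
          (by nlinarith [hr.1, hr.2]) N
    _ = _ := integral_congr_ae <| hC.mono fun z hz => by
        simp only [inner_eq_of_mem_circleC _ hz, ofReal_pow]
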